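/- arXiv:0911.0264 — 4 statements merged into one kernel-verified Lean document; each statement's English description precedes it below -/
import Mathlib

section
/- Let R be an associative ℚ-algebra and let a, c ∈ R. Set b = ca − ac, and assume that b commutes with both a and c. Then for all n₁, n₂ ∈ ℕ, b^{n₂} a^{n₁} = (n₁!/(n₁+n₂)!) · Σ_{j=0}^{n₂} (−1)^j · C(n₂, j) · c^{n₂−j} a^{n₁+n₂} c^j. -/
/-!
Write `D = ad c = [c, -]` and `b = [c, a]`. Left and right multiplication by `c` commute, so
the binomial theorem expands `D^n x` as `∑ (-1)^j C(n, j) c^(n-j) x c^j`. On the other hand, `D`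
is a derivation with `D a = b` and `D b = 0`, and `b` commutes with `a`, so
`D (a^(k+1) b^m) = (k+1) a^k b^(m+1)`; iterating, `D^n₂ (a^(n₁+n₂)) = ((n₁+n₂)!/n₁!) a^n₁ b^n₂`.
Comparing the two expressions for `D^n₂ (a^(n₁+n₂))` gives the identity.
-/

open LinearMap LieAlgebra Finset

attribute [local instance] LieRing.ofAssociativeRing

section

variable {S A : Type*} [CommRing S] [Ring A] [Algebra S A]

theorem ad_pow_apply_eq_sum (c x : A) (n : ℕ) :
    (ad S A c ^ n) x = ∑ j ∈ range (n + 1),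
      ((-1 : S) ^ j * (n.choose j : S)) • (c ^ (n - j) * x * c ^ j) := by
  have hcomm : Commute (-mulRight S c) (mulLeft S c) :=
    (commute_mulLeft_right (R := S) c c).symm.neg_left
  rw [ad_eq_lmul_left_sub_lmul_right, Pi.sub_apply, sub_eq_neg_add, hcomm.add_pow,
    LinearMap.sum_apply]
  refine sum_congr rfl fun j _ => ?_
  rw [← neg_one_smul S (mulRight S c), smul_pow, pow_mulLeft, pow_mulRight]
  simp only [Module.End.mul_apply, LinearMap.smul_apply, smul_mul_assoc, mulLeft_apply,
    mulRight_apply, Module.End.natCast_apply]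
  rw [← Nat.cast_smul_eq_nsmul S, mul_smul_comm, smul_mul_assoc, smul_smul]

theorem lie_pow_succ_of_commute {a c : A} (h : Commute ⁅c, a⁆ a) (n : ℕ) :
    ⁅c, a ^ (n + 1)⁆ = (n + 1) • (a ^ n * ⁅c, a⁆) := by
  induction n with
  | zero => simp
  | succ n ih =>
    calc ⁅c, a ^ (n + 2)⁆ = ⁅c, a ^ (n + 1)⁆ * a + a ^ (n + 1) * ⁅c, a⁆ := by
          simp only [Ring.lie_def, pow_succ]; noncomm_ring
      _ = (n + 2) • (a ^ (n + 1) * ⁅c, a⁆) := by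
          rw [ih, smul_mul_assoc, mul_assoc, h.eq, ← mul_assoc, ← pow_succ, ← succ_nsmul]

theorem ad_pow_apply_pow_of_commute {a c : A} (ha : Commute ⁅c, a⁆ a) (hc : Commute ⁅c, a⁆ c)
    (k m : ℕ) : (ad S A c ^ m) (a ^ (k + m)) = (k + 1).ascFactorial m • (a ^ k * ⁅c, a⁆ ^ m) := by
  induction m generalizing k with
  | zero => simp
  | succ m ih =>
    have hlie : ⁅c, a ^ (k + 1) * ⁅c, a⁆ ^ m⁆ = ⁅c, a ^ (k + 1)⁆ * ⁅c, a⁆ ^ m := by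
      rw [Ring.lie_def c, Ring.lie_def c (a ^ (k + 1)), mul_assoc _ _ c, (hc.pow_left m).eq]
      noncomm_ring
    rw [pow_succ', Module.End.mul_apply, ← add_assoc, add_right_comm, ih, map_nsmul, ad_apply,
      hlie, lie_pow_succ_of_commute ha, smul_mul_assoc, mul_assoc, ← pow_succ', smul_smul,
      Nat.ascFactorial_succ, ← Nat.succ_ascFactorial, mul_comm]

end

/-- with `b = ca - ac` commuting with `a` and `c`, one has
`b^{n₂} a^{n₁} = (n₁!/(n₁+n₂)!) Σ_{j=0}^{n₂} (-1)^j C(n₂,j) c^{n₂-j} a^{n₁+n₂} c^j`. -/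
theorem stmt_1 (R : Type*) [Ring R] [Algebra ℚ R] (a c : R)
    (hba : (c * a - a * c) * a = a * (c * a - a * c))
    (hbc : (c * a - a * c) * c = c * (c * a - a * c)) (n₁ n₂ : ℕ) :
    (c * a - a * c) ^ n₂ * a ^ n₁ =
      ((n₁.factorial : ℚ) / ((n₁ + n₂).factorial : ℚ)) •
        ∑ j ∈ Finset.range (n₂ + 1),
          ((-1 : ℚ) ^ j * (n₂.choose j : ℚ)) • (c ^ (n₂ - j) * a ^ (n₁ + n₂) * c ^ j) := by
  have hscalar : (n₁.factorial : ℚ) / (n₁ + n₂).factorial * (n₁ + 1).ascFactorial n₂ = 1 := by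
    rw [div_mul_eq_mul_div, ← Nat.cast_mul, Nat.factorial_mul_ascFactorial,
      div_self (by positivity)]
  rw [← ad_pow_apply_eq_sum, ad_pow_apply_pow_of_commute hba hbc, ← Nat.cast_smul_eq_nsmul ℚ,
    smul_smul, hscalar, one_smul]
  exact (Commute.pow_pow hba n₂ n₁).eq
end

section
/- In the ring of formal power series ℚ[[A, Z]], one has: (1 − A)⁻¹ (1 − AZ)⁻¹ (1 − AZ²)⁻¹ = Σ_{n₁=0}^{∞} Σ_{n₂=0}^{∞} Σ_{n₃=0}^{2n₁} A^{n₁} · (AZ)^{2n₂} · Z^{n₃}. -/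
/-!
Write `A = X 0`, `Z = X 1` and encode a coefficient family as a function on `ℤ × ℤ` vanishing off
the quadrant, so that multiplying by `A^i Z^j` is a shift. The coefficient of `A^a Z^z` on the right
counts the `n₂ ≥ 0` with `2n₂ ≤ min z (2a - z)`; grouping by `n₂` shows that the right-hand side is
`Q / (1 - A²Z²)`, where `Q` is the indicator series of the wedge `0 ≤ z ≤ 2a`. Summing the geometric
series in `Z` gives `(1 - Z) Q = 1/(1 - A) - Z/(1 - AZ²)`, i.e. `(1 - A)(1 - AZ²) Q = 1 + AZ`.
Hence the right-hand side times `(1 - A)(1 - AZ)(1 - AZ²)(1 + AZ)` is `1 + AZ`, and `1 + AZ` can be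
cancelled in the domain `ℚ[[A, Z]]`.
-/

open MvPowerSeries

namespace QuadrantSeries

variable {R : Type*} [CommRing R]

def ofFun (f : ℤ → ℤ → R) : MvPowerSeries (Fin 2) R := fun d => f (d 0) (d 1)

def SupportedInQuadrant (f : ℤ → ℤ → R) : Prop := ∀ a z, a < 0 ∨ z < 0 → f a z = 0

theorem coeff_ofFun (f : ℤ → ℤ → R) (d : Fin 2 →₀ ℕ) : coeff d (ofFun f) = f (d 0) (d 1) :=
  rfl

theorem ofFun_sub (f g : ℤ → ℤ → R) :
    ofFun (fun a z => f a z - g a z) = ofFun f - ofFun g :=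
  rfl

theorem ofFun_add (f g : ℤ → ℤ → R) :
    ofFun (fun a z => f a z + g a z) = ofFun f + ofFun g :=
  rfl

theorem one_eq_ofFun :
    (1 : MvPowerSeries (Fin 2) R) = ofFun fun a z => if a = 0 ∧ z = 0 then 1 else 0 := by
  ext d
  simp [coeff_ofFun, coeff_one, Finsupp.ext_iff, Fin.forall_fin_two]

theorem supportedInQuadrant_delta :
    SupportedInQuadrant fun a z => if a = 0 ∧ z = 0 then (1 : R) else 0 :=
  fun _ _ h => if_neg (by omega)

theorem SupportedInQuadrant.sub_shift {f : ℤ → ℤ → R} (hf : SupportedInQuadrant f)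
    (i j : ℕ) : SupportedInQuadrant fun a z => f a z - f (a - i) (z - j) := by
  intro a z h
  show f a z - _ = 0
  rw [hf a z h, hf (a - i) (z - j) (by omega), sub_zero]

theorem ofFun_mul_X_pow_mul_X_pow {f : ℤ → ℤ → R} (hf : SupportedInQuadrant f) (i j : ℕ) :
    ofFun f * (X 0 ^ i * X 1 ^ j) = ofFun fun a z => f (a - i) (z - j) := by
  rw [X_pow_eq, X_pow_eq, monomial_mul_monomial, mul_one]
  ext d
  rw [coeff_mul_monomial, mul_one, coeff_ofFun, coeff_ofFun]
  split_ifs with hd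
  · have hi : i ≤ d 0 := by simpa using hd 0
    have hj : j ≤ d 1 := by simpa using hd 1
    simp [Nat.cast_sub hi, Nat.cast_sub hj]
  · refine (hf _ _ ?_).symm
    simp [Finsupp.le_def, Fin.forall_fin_two] at hd
    omega

theorem ofFun_mul_one_sub_X_pow_mul_X_pow {f : ℤ → ℤ → R} (hf : SupportedInQuadrant f)
    (i j : ℕ) :
    ofFun f * (1 - X 0 ^ i * X 1 ^ j) = ofFun fun a z => f a z - f (a - i) (z - j) := by
  rw [mul_sub, mul_one, ofFun_mul_X_pow_mul_X_pow hf, ofFun_sub]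

end QuadrantSeries

open QuadrantSeries

def wedgeIndicator (a z : ℤ) : ℤ := if 0 ≤ z ∧ z ≤ 2 * a then 1 else 0

def wedgeCount (a z : ℤ) : ℤ := max 0 (min z (2 * a - z) / 2 + 1)

theorem supportedInQuadrant_wedgeIndicator :
    SupportedInQuadrant fun a z => (wedgeIndicator a z : ℚ) := by
  intro a z h
  have : wedgeIndicator a z = 0 := by unfold wedgeIndicator; split_ifs <;> omega
  simp [this]

theorem supportedInQuadrant_wedgeCount :
    SupportedInQuadrant fun a z => (wedgeCount a z : ℚ) := by
  intro a z h
  have : wedgeCount a z = 0 := by unfold wedgeCount; omega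
  simp [this]

theorem wedgeCount_sub_wedgeCount (a z : ℤ) :
    wedgeCount a z - wedgeCount (a - 2) (z - 2) = wedgeIndicator a z := by
  unfold wedgeCount wedgeIndicator
  split_ifs <;> omega

theorem wedgeIndicator_recurrence (a z : ℤ) :
    wedgeIndicator a z - wedgeIndicator (a - 1) z -
        (wedgeIndicator (a - 1) (z - 2) - wedgeIndicator (a - 1 - 1) (z - 2)) =
      (if a = 0 ∧ z = 0 then 1 else 0) + if a - 1 = 0 ∧ z - 1 = 0 then 1 else 0 := by
  unfold wedgeIndicator
  split_ifs <;> omega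

theorem card_filter_eq_wedgeCount (a z : ℕ) :
    ((((Finset.range (a + 1) ×ˢ Finset.range (a + 1) ×ˢ Finset.range (z + 1)).filter
        (fun t => t.1 + 2 * t.2.1 = a ∧ 2 * t.2.1 + t.2.2 = z ∧ t.2.2 ≤ 2 * t.1)).card : ℕ) : ℤ) =
      wedgeCount a z := by
  have himage : (Finset.range (a + 1) ×ˢ Finset.range (a + 1) ×ˢ Finset.range (z + 1)).filter
        (fun t => t.1 + 2 * t.2.1 = a ∧ 2 * t.2.1 + t.2.2 = z ∧ t.2.2 ≤ 2 * t.1) =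
      (Finset.range (wedgeCount a z).toNat).image fun k => (a - 2 * k, k, z - 2 * k) := by
    ext ⟨n₁, n₂, n₃⟩
    simp only [Finset.mem_filter, Finset.mem_product, Finset.mem_range, Finset.mem_image,
      Prod.mk.injEq, wedgeCount]
    constructor
    · rintro ⟨-, h₁, h₂, h₃⟩
      exact ⟨n₂, by omega, by omega, rfl, by omega⟩
    · rintro ⟨k, hk, h₁, rfl, h₃⟩
      omega
  rw [himage, Finset.card_image_of_injective _ fun k l hkl => congrArg (fun t => t.2.1) hkl,
    Finset.card_range]
  exact Int.toNat_of_nonneg (le_max_left _ _)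

theorem ofFun_wedgeCount_mul_one_sub :
    ofFun (fun a z => (wedgeCount a z : ℚ)) * (1 - (X 0 * X 1) ^ 2) =
      ofFun fun a z => (wedgeIndicator a z : ℚ) := by
  rw [mul_pow, ofFun_mul_one_sub_X_pow_mul_X_pow supportedInQuadrant_wedgeCount]
  congr! 3 with a z
  simpa using congrArg (Int.cast : ℤ → ℚ) (wedgeCount_sub_wedgeCount a z)

theorem ofFun_wedgeIndicator_mul_one_sub_mul_one_sub :
    ofFun (fun a z => (wedgeIndicator a z : ℚ)) * (1 - X 0) * (1 - X 0 * X 1 ^ 2) =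
      1 + X 0 * X 1 := by
  suffices ofFun (fun a z => (wedgeIndicator a z : ℚ)) * (1 - X 0 ^ 1 * X 1 ^ 0) *
      (1 - X 0 ^ 1 * X 1 ^ 2) = 1 + 1 * (X 0 ^ 1 * X 1 ^ 1) by simpa using this
  rw [ofFun_mul_one_sub_X_pow_mul_X_pow supportedInQuadrant_wedgeIndicator,
    ofFun_mul_one_sub_X_pow_mul_X_pow (supportedInQuadrant_wedgeIndicator.sub_shift _ _),
    one_eq_ofFun,
    ofFun_mul_X_pow_mul_X_pow supportedInQuadrant_delta, ← ofFun_add]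
  congr! 3 with a z
  simpa using congrArg (Int.cast : ℤ → ℚ) (wedgeIndicator_recurrence a z)

/-- `(1-A)⁻¹(1-AZ)⁻¹(1-AZ²)⁻¹ = Σ_{n₁,n₂≥0} Σ_{n₃=0}^{2n₁} A^{n₁}(AZ)^{2n₂}Z^{n₃}`
in `ℚ[[A, Z]]`, where `A = X 0` and `Z = X 1`; the coefficient of `A^a Z^z` on the right is
the number of triples `(n₁,n₂,n₃)` with `n₁+2n₂ = a`, `2n₂+n₃ = z`, `n₃ ≤ 2n₁`. -/
theorem stmt_8 :
    ((1 - MvPowerSeries.X 0)⁻¹ * (1 - MvPowerSeries.X 0 * MvPowerSeries.X 1)⁻¹ *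
        (1 - MvPowerSeries.X 0 * (MvPowerSeries.X 1) ^ 2)⁻¹ : MvPowerSeries (Fin 2) ℚ) =
      (fun d : Fin 2 →₀ ℕ =>
        (((Finset.range (d 0 + 1) ×ˢ Finset.range (d 0 + 1) ×ˢ Finset.range (d 1 + 1)).filter
            (fun t => t.1 + 2 * t.2.1 = d 0 ∧ 2 * t.2.1 + t.2.2 = d 1 ∧ t.2.2 ≤ 2 * t.1)).card
          : ℚ)) := by
  have hcoeff : (fun d : Fin 2 →₀ ℕ =>
        (((Finset.range (d 0 + 1) ×ˢ Finset.range (d 0 + 1) ×ˢ Finset.range (d 1 + 1)).filter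
            (fun t => t.1 + 2 * t.2.1 = d 0 ∧ 2 * t.2.1 + t.2.2 = d 1 ∧ t.2.2 ≤ 2 * t.1)).card
          : ℚ)) = ofFun fun a z => (wedgeCount a z : ℚ) := by
    funext d
    show _ = ((wedgeCount (d 0) (d 1) : ℤ) : ℚ)
    rw [← card_filter_eq_wedgeCount, Int.cast_natCast]
  rw [hcoeff, ← MvPowerSeries.mul_inv_rev, ← MvPowerSeries.mul_inv_rev,
    MvPowerSeries.inv_eq_iff_mul_eq_one (by simp)]
  refine mul_right_cancel₀ (b := 1 + X 0 * X 1)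
    (fun h => by simpa using congrArg constantCoeff h) ?_
  calc _ = ofFun (fun a z => (wedgeCount a z : ℚ)) * (1 - (X 0 * X 1) ^ 2) * (1 - X 0) *
          (1 - X 0 * X 1 ^ 2) := by ring
    _ = 1 * (1 + X 0 * X 1) := by
      rw [ofFun_wedgeCount_mul_one_sub, ofFun_wedgeIndicator_mul_one_sub_mul_one_sub, one_mul]
end

section
/- Let i ≥ 3, let μ₂, …, μ_{i−1} be nonnegative integers, and let μ_i be a real number. Let n₁, …, n_{i−1} be natural numbers satisfying n_{i+1−k} ≤ μ_k for 2 ≤ k ≤ i−1, and define the 'norm' P = ∏_{j=1}^{i−1} [ n_j! · ∏_{k_j=0}^{n_j−1} ( Σ_{l=i+1−j}^{i} μ_l − Σ_{l=i+2−j}^{i} n_{i+1−l} − k_j ) ]. If μ_i ∉ ℤ, μ_i > −1, and Σ_{j=1}^{i−1} n_j ≤ ⌊μ_i⌋ + 2, then P < 0 if and only if n₁ = ⌊μ_i⌋ + 2 and n_j = 0 for all j ≥ 2; otherwise P > 0. -/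
/-!
Each factor of `P` is the `sl(2)` norm `m! ∏_{k<m} (a - k)` of `(E^{-α_j})^{n_j}` acting on a
vector whose weight pairs with `α_j^∨` to `a = a_j`. Such a norm is positive as soon as
`a > m - 1`. Telescoping the two sums defining `a_j` gives
`a_j = μ_i + n_j - n_1 + Σ_l (μ_l - n_{i+1-l})`, and the constraint `n_{i+1-l} ≤ μ_l` makes the
last sum nonnegative, so `a_j > n_j - 1` whenever `n_1 ≤ ⌊μ_i⌋ + 1`. The depth bound leaves only
the case `n_1 = ⌊μ_i⌋ + 2`, where every other `n_j` vanishes and `P = n_1! ∏_{k<n_1} (μ_i - k)`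
has exactly one negative factor, `μ_i - ⌊μ_i⌋ - 1`.
-/

open Finset

section Sl2Norm

variable {R : Type*} [CommRing R]

def sl2Norm (a : R) (m : ℕ) : R := m.factorial * ∏ k ∈ range m, (a - k)

@[simp]
lemma sl2Norm_zero (a : R) : sl2Norm a 0 = 1 := by
  simp [sl2Norm]

variable [PartialOrder R] [IsStrictOrderedRing R]

lemma sl2Norm_pos {a : R} {m : ℕ} (h : (m : R) - 1 < a) : 0 < sl2Norm a m := by
  rw [sl2Norm, ← descPochhammer_eval_eq_prod_range]
  exact mul_pos (by positivity) (descPochhammer_pos h)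

lemma sl2Norm_succ_neg {a : R} {m : ℕ} (h₁ : (m : R) - 1 < a) (h₂ : a < m) :
    sl2Norm a (m + 1) < 0 := by
  rw [sl2Norm, ← descPochhammer_eval_eq_prod_range, descPochhammer_succ_eval]
  exact mul_neg_of_pos_of_neg (by positivity)
    (mul_neg_of_pos_of_neg (descPochhammer_pos h₁) (sub_neg.mpr h₂))

end Sl2Norm

lemma sum_Icc_sub_sum_Icc_add_one {G : Type*} [AddCommGroup G] (g h : ℕ → G) {s i : ℕ}
    (hsi : s ≤ i) :
    ∑ l ∈ Icc s i, g l - ∑ l ∈ Icc (s + 1) i, h l =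
      g i - h i + h s + ∑ l ∈ Ico s i, (g l - h l) := by
  have hg := sum_insert (f := g) (right_notMem_Ico (a := s) (b := i))
  have hh := sum_insert (f := h) (right_notMem_Ico (a := s) (b := i))
  have hh' := sum_insert (f := h) (by simp : s ∉ Icc (s + 1) i)
  rw [Ico_insert_right hsi] at hg hh
  rw [insert_Icc_add_one_left_eq_Icc hsi] at hh'
  rw [sum_sub_distrib, hg, ← sub_eq_iff_eq_add'.mpr hh', hh]
  abel

lemma Finset.eq_zero_of_sum_le {ι : Type*} {s : Finset ι} {f : ι → ℕ} {a b : ι} (ha : a ∈ s)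
    (hb : b ∈ s) (hba : b ≠ a) (h : ∑ j ∈ s, f j ≤ f a) : f b = 0 := by
  classical
  have hsplit := add_sum_erase s f ha
  have hb_le := single_le_sum (fun j _ => Nat.zero_le (f j)) (mem_erase.mpr ⟨hba, hb⟩)
  omega

section WeightPairing

variable (i : ℕ) (M : ℕ → ℝ) (n : ℕ → ℕ)

/-- `⟨λ_j, α_j^∨⟩`, where `λ_j` is the weight on which the operators `E^{-α_j}` act. -/
def weightPairing (j : ℕ) : ℝ :=
  (∑ l ∈ Icc (i + 1 - j) i, M l) - ∑ l ∈ Icc (i + 2 - j) i, (n (i + 1 - l) : ℝ)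

variable {i M n}

lemma weightPairing_eq {j : ℕ} (hj₁ : 1 ≤ j) (hji : j ≤ i) :
    weightPairing i M n j =
      M i + n j - n 1 + ∑ l ∈ Ico (i + 1 - j) i, (M l - n (i + 1 - l)) := by
  rw [weightPairing, show i + 2 - j = i + 1 - j + 1 by omega,
    sum_Icc_sub_sum_Icc_add_one _ _ (by omega : i + 1 - j ≤ i),
    show i + 1 - (i + 1 - j) = j by omega, Nat.add_sub_cancel_left]
  ring

lemma weightPairing_one (hi : 1 ≤ i) : weightPairing i M n 1 = M i := by
  simp [weightPairing_eq le_rfl hi]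

lemma le_weightPairing (hn : ∀ k, 2 ≤ k → k ≤ i - 1 → (n (i + 1 - k) : ℝ) ≤ M k) {j : ℕ}
    (hj : j ∈ Icc 1 (i - 1)) : M i + n j - n 1 ≤ weightPairing i M n j := by
  rw [mem_Icc] at hj
  rw [weightPairing_eq hj.1 (by omega), le_add_iff_nonneg_right]
  refine sum_nonneg fun l hl => sub_nonneg.mpr (hn l ?_ ?_) <;> grind

end WeightPairing

theorem stmt_14_general (i : ℕ) (hi : 3 ≤ i) (M : ℕ → ℝ)
    (hMi1 : -1 < M i) (hMi2 : ∀ m : ℤ, (m : ℝ) ≠ M i)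
    (n : ℕ → ℕ)
    (hn : ∀ k, 2 ≤ k → k ≤ i - 1 → (n (i + 1 - k) : ℝ) ≤ M k)
    (hsum : (∑ j ∈ Finset.Icc 1 (i - 1), (n j : ℤ)) ≤ ⌊M i⌋ + 2) :
    let P : ℝ := ∏ j ∈ Finset.Icc 1 (i - 1),
      ((n j).factorial : ℝ) * ∏ k ∈ Finset.range (n j),
        ((∑ l ∈ Finset.Icc (i + 1 - j) i, M l) -
          (∑ l ∈ Finset.Icc (i + 2 - j) i, (n (i + 1 - l) : ℝ)) - k)
    (P < 0 ↔ ((n 1 : ℤ) = ⌊M i⌋ + 2 ∧ ∀ j, 2 ≤ j → j ≤ i - 1 → n j = 0)) ∧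
      (¬((n 1 : ℤ) = ⌊M i⌋ + 2 ∧ ∀ j, 2 ≤ j → j ≤ i - 1 → n j = 0) → 0 < P) := by
  intro P
  have hP : P = ∏ j ∈ Icc 1 (i - 1), sl2Norm (weightPairing i M n j) (n j) := rfl
  have hfloor_lt : (⌊M i⌋ : ℝ) < M i := (Int.floor_le _).lt_of_ne (hMi2 _)
  have hlt_floor := Int.lt_floor_add_one (M i)
  have hfloor_ge : -1 ≤ ⌊M i⌋ := Int.le_floor.mpr (by exact_mod_cast hMi1.le)
  have h1mem : 1 ∈ Icc 1 (i - 1) := mem_Icc.mpr ⟨le_rfl, by omega⟩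
  have hn1 : (n 1 : ℤ) ≤ ⌊M i⌋ + 2 := (single_le_sum (fun j _ => by positivity) h1mem).trans hsum
  by_cases hcase : (n 1 : ℤ) = ⌊M i⌋ + 2
  · have hsum_le : ∑ j ∈ Icc 1 (i - 1), n j ≤ n 1 := by exact_mod_cast hsum.trans hcase.ge
    have hzero : ∀ j ∈ Icc 1 (i - 1), j ≠ 1 → n j = 0 := fun j hj hj1 =>
      eq_zero_of_sum_le h1mem hj hj1 hsum_le
    obtain ⟨m, hm⟩ : ∃ m, n 1 = m + 1 := Nat.exists_eq_succ_of_ne_zero (by omega)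
    have hm_cast : (m : ℝ) = ⌊M i⌋ + 1 := by exact_mod_cast (by omega : (m : ℤ) = ⌊M i⌋ + 1)
    have hneg : P < 0 := by
      rw [hP, prod_eq_single_of_mem 1 h1mem fun j hj hj1 => by simp [hzero j hj hj1],
        weightPairing_one (by omega), hm]
      exact sl2Norm_succ_neg (by linarith) (by linarith)
    have hcond : (n 1 : ℤ) = ⌊M i⌋ + 2 ∧ ∀ j, 2 ≤ j → j ≤ i - 1 → n j = 0 :=
      ⟨hcase, fun j hj2 hji => hzero j (mem_Icc.mpr ⟨by omega, hji⟩) (by omega)⟩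
    exact ⟨iff_of_true hneg hcond, fun h => (h hcond).elim⟩
  · have hn1_le : (n 1 : ℝ) ≤ ⌊M i⌋ + 1 := by exact_mod_cast (by omega : (n 1 : ℤ) ≤ ⌊M i⌋ + 1)
    have hpos : 0 < P := by
      rw [hP]
      refine prod_pos fun j hj => sl2Norm_pos ?_
      linarith [le_weightPairing hn hj]
    exact ⟨iff_of_false hpos.not_gt fun h => hcase h.1, fun _ => hpos⟩

/-- Lemma B6: for `μ_i ∉ ℤ`, `μ_i > -1` and depth `Σ n_j ≤ ⌊μ_i⌋ + 2`,
the norm `P` is negative iff `n₁ = ⌊μ_i⌋ + 2` and all other `n_j` vanish; otherwise `P > 0`.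
Here `M l` encodes `μ_l` (a nonnegative integer for `2 ≤ l ≤ i-1`, real for `l = i`). -/
theorem stmt_14 (i : ℕ) (hi : 3 ≤ i) (M : ℕ → ℝ)
    (hMint : ∀ l, 2 ≤ l → l ≤ i - 1 → ∃ m : ℕ, M l = m)
    (hMi1 : -1 < M i) (hMi2 : ∀ m : ℤ, (m : ℝ) ≠ M i)
    (n : ℕ → ℕ)
    (hn : ∀ k, 2 ≤ k → k ≤ i - 1 → (n (i + 1 - k) : ℝ) ≤ M k)
    (hsum : (∑ j ∈ Finset.Icc 1 (i - 1), (n j : ℤ)) ≤ ⌊M i⌋ + 2) :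
    let P : ℝ := ∏ j ∈ Finset.Icc 1 (i - 1),
      ((n j).factorial : ℝ) * ∏ k ∈ Finset.range (n j),
        ((∑ l ∈ Finset.Icc (i + 1 - j) i, M l) -
          (∑ l ∈ Finset.Icc (i + 2 - j) i, (n (i + 1 - l) : ℝ)) - k)
    (P < 0 ↔ ((n 1 : ℤ) = ⌊M i⌋ + 2 ∧ ∀ j, 2 ≤ j → j ≤ i - 1 → n j = 0)) ∧
      (¬((n 1 : ℤ) = ⌊M i⌋ + 2 ∧ ∀ j, 2 ≤ j → j ≤ i - 1 → n j = 0) → 0 < P) :=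
  stmt_14_general i hi M hMi1 hMi2 n hn hsum
end

section
/- Let i ≥ 3, let μ₂, …, μ_{i−1} be nonnegative integers and μ_i a nonnegative integer. Let n₁, …, n_{i−1} be natural numbers with n_{i+1−k} ≤ μ_k for 2 ≤ k ≤ i−1 and Σ_{j=1}^{i−1} n_j ≤ μ_i + 1, and define P = ∏_{j=1}^{i−1} [ n_j! · ∏_{k_j=0}^{n_j−1} ( Σ_{l=i+1−j}^{i} μ_l − Σ_{l=i+2−j}^{i} n_{i+1−l} − k_j ) ]. Then P = 0 if and only if n₁ = μ_i + 1 and n_j = 0 for all j ≥ 2; otherwise P > 0. -/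
/-!
The `j`-th factor of `P` is `n_j! ∏_{k<n_j} (c_j - k)` with
`c_j = ∑_{l=i+1-j}^{i} μ_l - ∑_{l=i+2-j}^{i} n_{i+1-l}`; it is positive once `c_j ≥ n_j`, i.e.
`∑_{l=i+1-j}^{i} n_{i+1-l} ≤ ∑_{l=i+1-j}^{i} μ_l`. The hypotheses give this termwise, except for
the term `n₁ ≤ μ_i` at `l = i`. The depth bound leaves `n₁ = μ_i + 1` as the only other case:
there the factor `c_1 - μ_i = μ_i - μ_i` of `j = 1` vanishes, and the depth bound forces all
other `n_j` to vanish.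
-/

open Finset

theorem prod_range_sub_natCast_pos {R : Type*} [CommRing R] [LinearOrder R] [IsStrictOrderedRing R]
    {c : R} {m : ℕ} (h : (m : R) ≤ c) : 0 < ∏ k ∈ range m, (c - k) :=
  prod_pos fun _ hk => sub_pos.2 <| (Nat.cast_lt.2 (mem_range.1 hk)).trans_le h

theorem Finset.eq_zero_of_sum_le_of_ne {ι : Type*} [DecidableEq ι] {s : Finset ι} {f : ι → ℕ}
    {a b : ι} (ha : a ∈ s) (hb : b ∈ s) (hba : b ≠ a) (h : ∑ x ∈ s, f x ≤ f a) : f b = 0 := by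
  have hpair : f a + f b ≤ ∑ x ∈ s, f x := by
    rw [← sum_pair hba.symm]
    exact sum_le_sum_of_subset (insert_subset ha (singleton_subset_iff.2 hb))
  omega

theorem sum_reflected_le_sum_of_le {i j : ℕ} {μ n : ℕ → ℕ}
    (hn : ∀ k, 2 ≤ k → k ≤ i - 1 → n (i + 1 - k) ≤ μ k) (h1 : n 1 ≤ μ i)
    (hj : 1 ≤ j) (hji : j ≤ i - 1) :
    ∑ l ∈ Icc (i + 2 - j) i, n (i + 1 - l) + n j ≤ ∑ l ∈ Icc (i + 1 - j) i, μ l := by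
  have hIcc : insert (i + 1 - j) (Icc (i + 1 - j + 1) i) = Icc (i + 1 - j) i :=
    insert_Icc_add_one_left_eq_Icc (by omega)
  have hshift : i + 1 - j + 1 = i + 2 - j := by omega
  calc ∑ l ∈ Icc (i + 2 - j) i, n (i + 1 - l) + n j = ∑ l ∈ Icc (i + 1 - j) i, n (i + 1 - l) := by
        rw [← hIcc, sum_insert (by simp), hshift, Nat.sub_sub_self (by omega), add_comm]
    _ ≤ ∑ l ∈ Icc (i + 1 - j) i, μ l := sum_le_sum fun l hl => ?_
  rw [mem_Icc] at hl
  rcases hl.2.lt_or_eq with hlt | rfl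
  · exact hn l (by omega) (by omega)
  · simpa using h1

/-- The Lemma B5 norm `P` of `∏_j (E^{-α_j})^{n_j} |μ⟩`. -/
noncomputable def descendantNorm (i : ℕ) (μ n : ℕ → ℕ) : ℝ :=
  ∏ j ∈ Icc 1 (i - 1), ((n j).factorial : ℝ) * ∏ k ∈ range (n j),
    ((∑ l ∈ Icc (i + 1 - j) i, (μ l : ℝ)) - (∑ l ∈ Icc (i + 2 - j) i, (n (i + 1 - l) : ℝ)) - k)

theorem descendantNorm_pos {i : ℕ} {μ n : ℕ → ℕ}
    (hn : ∀ k, 2 ≤ k → k ≤ i - 1 → n (i + 1 - k) ≤ μ k) (h1 : n 1 ≤ μ i) :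
    0 < descendantNorm i μ n := by
  refine prod_pos fun j hj => mul_pos (by positivity) (prod_range_sub_natCast_pos ?_)
  rw [mem_Icc] at hj
  rw [le_sub_iff_add_le']
  exact_mod_cast sum_reflected_le_sum_of_le hn h1 hj.1 hj.2

theorem descendantNorm_eq_zero {i : ℕ} {μ n : ℕ → ℕ} (hi : 2 ≤ i) (h1 : n 1 = μ i + 1) :
    descendantNorm i μ n = 0 := by
  refine prod_eq_zero (i := 1) (by simp; omega) (mul_eq_zero_of_right _ ?_)
  refine prod_eq_zero (i := μ i) (by simp [h1]) ?_
  simp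

/-- Lemma B7: for nonnegative integer `μ_l` and depth `Σ n_j ≤ μ_i + 1`,
the norm `P` vanishes iff `n₁ = μ_i + 1` and all other `n_j` vanish; otherwise `P > 0`. -/
theorem stmt_15 (i : ℕ) (hi : 3 ≤ i) (μ : ℕ → ℕ) (n : ℕ → ℕ)
    (hn : ∀ k, 2 ≤ k → k ≤ i - 1 → n (i + 1 - k) ≤ μ k)
    (hsum : (∑ j ∈ Finset.Icc 1 (i - 1), n j) ≤ μ i + 1) :
    let P : ℝ := ∏ j ∈ Finset.Icc 1 (i - 1),
      ((n j).factorial : ℝ) * ∏ k ∈ Finset.range (n j),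
        ((∑ l ∈ Finset.Icc (i + 1 - j) i, (μ l : ℝ)) -
          (∑ l ∈ Finset.Icc (i + 2 - j) i, (n (i + 1 - l) : ℝ)) - k)
    (P = 0 ↔ (n 1 = μ i + 1 ∧ ∀ j, 2 ≤ j → j ≤ i - 1 → n j = 0)) ∧
      (¬(n 1 = μ i + 1 ∧ ∀ j, 2 ≤ j → j ≤ i - 1 → n j = 0) → 0 < P) := by
  show (descendantNorm i μ n = 0 ↔ _) ∧ (_ → 0 < descendantNorm i μ n)
  have h1mem : 1 ∈ Icc 1 (i - 1) := by simp; omega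
  have hn1 : n 1 ≤ μ i + 1 := (single_le_sum (fun _ _ => Nat.zero_le _) h1mem).trans hsum
  have hexceptional : (n 1 = μ i + 1 ∧ ∀ j, 2 ≤ j → j ≤ i - 1 → n j = 0) ↔ n 1 = μ i + 1 :=
    ⟨And.left, fun h => ⟨h, fun j hj2 hji =>
      eq_zero_of_sum_le_of_ne h1mem (by simp; omega) (by omega) (h ▸ hsum)⟩⟩
  rw [hexceptional]
  rcases hn1.lt_or_eq with hlt | heq
  · have hP := descendantNorm_pos hn (Nat.le_of_lt_succ hlt)
    exact ⟨iff_of_false hP.ne' hlt.ne, fun _ => hP⟩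
  · exact ⟨iff_of_true (descendantNorm_eq_zero (by omega) heq) heq, fun h => absurd heq h⟩
end
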